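/- Co-analyticity for R(M'_S4): if v ∈ L'_S4 is a level valuation and Λ is a nonempty set of modal formulas closed under subformulas, then the restriction of v to Λ belongs to PLV'(Λ). -/
import Mathlib


/-- Modal formulas over signature Σ = {¬, □, →, ∨, ∧}. -/
inductive MF
  | var : ℕ → MF
  | neg : MF → MF
  | box : MF → MF
  | imp : MF → MF → MF
  | dis : MF → MF → MF
  | con : MF → MF → MF
deriving DecidableEq

/-- The three truth values 0, 1, 2. -/
inductive V3
  | z | o | t
deriving DecidableEq

/-- Designated values D = {1, 2}. -/
def Des : Set V3 := {V3.o, V3.t}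

def negOp : V3 → Set V3
  | .z => {.o, .t}
  | .o => {.z}
  | .t => {.z}

def boxOp : V3 → Set V3
  | .z => {.z}
  | .o => {.z}
  | .t => {.t}

def impOp : V3 → V3 → Set V3
  | .z, .z => {.o, .t}
  | .z, .o => {.o, .t}
  | .z, .t => {.t}
  | .o, .z => {.z}
  | .o, .o => {.o, .t}
  | .o, .t => {.t}
  | .t, .z => {.z}
  | .t, .o => {.o}
  | .t, .t => {.t}

def disOp : V3 → V3 → Set V3
  | .z, .z => {.z}
  | .z, .o => {.o, .t}
  | .o, .z => {.o, .t}
  | .o, .o => {.o, .t}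
  | _, _ => {.t}

def conOp : V3 → V3 → Set V3
  | .z, _ => {.z}
  | _, .z => {.z}
  | .t, .t => {.t}
  | _, _ => {.o}

/-- Valuations over the reduced Nmatrix M'_S4. -/
def IsVal (v : MF → V3) : Prop :=
  (∀ α, v (.neg α) ∈ negOp (v α)) ∧
  (∀ α, v (.box α) ∈ boxOp (v α)) ∧
  (∀ α β, v (.imp α β) ∈ impOp (v α) (v β)) ∧
  (∀ α β, v (.dis α β) ∈ disOp (v α) (v β)) ∧
  (∀ α β, v (.con α β) ∈ conOp (v α) (v β))

/-- The levels L_k. -/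
def LevelS4 : ℕ → Set (MF → V3)
  | 0 => {v | IsVal v}
  | (k+1) => {v ∈ LevelS4 k | ∀ α, (∀ w ∈ LevelS4 k, w α ∈ Des) → v α = V3.t}

/-- Level valuations L'_S4 = ⋂_{k ≥ 0} L_k. -/
def LVS4 : Set (MF → V3) := ⋂ k, LevelS4 k

/-- Theorems of the Hilbert calculus H_S4 : classical propositional axioms over
{¬,→,∨,∧}, plus K, T, 4, with modus ponens and necessitation. -/
inductive S4Thm : MF → Prop
  | ax1 (α β : MF) : S4Thm (α.imp (β.imp α))
  | ax2 (α β γ : MF) : S4Thm ((α.imp (β.imp γ)).imp ((α.imp β).imp (α.imp γ)))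
  | ax3 (α β : MF) : S4Thm (α.imp (β.imp (α.con β)))
  | ax4 (α β : MF) : S4Thm ((α.con β).imp α)
  | ax5 (α β : MF) : S4Thm ((α.con β).imp β)
  | ax6 (α β : MF) : S4Thm (α.imp (α.dis β))
  | ax7 (α β : MF) : S4Thm (β.imp (α.dis β))
  | ax8 (α β γ : MF) : S4Thm ((α.imp γ).imp ((β.imp γ).imp ((α.dis β).imp γ)))
  | ax9 (α β : MF) : S4Thm ((β.imp α).imp ((β.imp α.neg).imp β.neg))
  | ax10 (α β : MF) : S4Thm (α.imp (α.neg.imp β))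
  | dne (α : MF) : S4Thm (α.neg.neg.imp α)
  | axK (α β : MF) : S4Thm ((α.imp β).box.imp (α.box.imp β.box))
  | axT (α : MF) : S4Thm (α.box.imp α)
  | axFour (α : MF) : S4Thm (α.box.imp α.box.box)
  | mp {α β : MF} : S4Thm (α.imp β) → S4Thm α → S4Thm β
  | nec {α : MF} : S4Thm α → S4Thm α.box

/-- Γ ⊢_S4 φ : either φ is a theorem, or some β₁,…,βₙ ∈ Γ (n ≥ 1) give a theorem
β₁ → (β₂ → (… → (βₙ → φ)…)). -/
def S4Deriv (Γ : Set MF) (φ : MF) : Prop :=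
  S4Thm φ ∨ ∃ l : List MF, l ≠ [] ∧ (∀ β ∈ l, β ∈ Γ) ∧ S4Thm (l.foldr MF.imp φ)

/-- Δ is φ-saturated (w.r.t. ⊢_S4). -/
def SatS4 (Δ : Set MF) (φ : MF) : Prop :=
  ¬ S4Deriv Δ φ ∧ ∀ α ∉ Δ, S4Deriv (insert α Δ) φ

open Classical in
/-- The canonical function v_Δ. -/
noncomputable def vDeltaS4 (Δ : Set MF) : MF → V3 :=
  fun α => if MF.box α ∈ Δ then V3.t else if α ∈ Δ then V3.o else V3.z

/-- Λ is closed under (immediate, hence all) subformulas. -/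
def SubClosed (Λ : Set MF) : Prop :=
  (∀ α, MF.neg α ∈ Λ → α ∈ Λ) ∧
  (∀ α, MF.box α ∈ Λ → α ∈ Λ) ∧
  (∀ α β, MF.imp α β ∈ Λ → α ∈ Λ ∧ β ∈ Λ) ∧
  (∀ α β, MF.dis α β ∈ Λ → α ∈ Λ ∧ β ∈ Λ) ∧
  (∀ α β, MF.con α β ∈ Λ → α ∈ Λ ∧ β ∈ Λ)

/-- Partial valuations with domain Λ (modelled as total functions constrained on Λ). -/
def IsPVal (Λ : Set MF) (v : MF → V3) : Prop :=
  (∀ α, MF.neg α ∈ Λ → v (.neg α) ∈ negOp (v α)) ∧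
  (∀ α, MF.box α ∈ Λ → v (.box α) ∈ boxOp (v α)) ∧
  (∀ α β, MF.imp α β ∈ Λ → v (.imp α β) ∈ impOp (v α) (v β)) ∧
  (∀ α β, MF.dis α β ∈ Λ → v (.dis α β) ∈ disOp (v α) (v β)) ∧
  (∀ α β, MF.con α β ∈ Λ → v (.con α β) ∈ conOp (v α) (v β))

/-- PLV'(Λ): partial' level valuations over Λ (witnesses amongst level valuations). -/
def PLV' (Λ : Set MF) : Set (MF → V3) :=
  {v | IsPVal Λ v ∧ ∀ α ∈ Λ, v α = V3.o →
    ∃ w ∈ LVS4, w α = V3.z ∧ ∀ β ∈ Λ, v β = V3.t → w β = V3.t}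

/-- PLV(Λ): partial level valuations over Λ, defined as the largest subset of
PV(Λ) whose condition is witnessed inside itself. -/
def PLV (Λ : Set MF) : Set (MF → V3) :=
  ⋃₀ {S | (∀ v ∈ S, IsPVal Λ v) ∧
      ∀ v ∈ S, ∀ α ∈ Λ, v α = V3.o →
        ∃ w ∈ S, w α = V3.z ∧ ∀ β ∈ Λ, v β = V3.t → w β = V3.t}

/-- Set of subformulas of a modal formula. -/
def MF.subf : MF → Finset MF
  | .var n => {.var n}
  | .neg α => insert (.neg α) α.subf
  | .box α => insert (.box α) α.subf
  | .imp α β => insert (.imp α β) (α.subf ∪ β.subf)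
  | .dis α β => insert (.dis α β) (α.subf ∪ β.subf)
  | .con α β => insert (.con α β) (α.subf ∪ β.subf)

/-! ### Auxiliary Hilbert-calculus lemmas -/

section Aux

lemma thmId (α : MF) : S4Thm (α.imp α) :=
  ((S4Thm.ax2 α (α.imp α) α).mp (S4Thm.ax1 α (α.imp α))).mp (S4Thm.ax1 α α)

lemma thmComp {A B C : MF} (h1 : S4Thm (A.imp B)) (h2 : S4Thm (B.imp C)) :
    S4Thm (A.imp C) :=
  (((S4Thm.ax2 A B C).mp ((S4Thm.ax1 (B.imp C) A).mp h2))).mp h1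

lemma thmLift {A B : MF} (γ : MF) (h : S4Thm (A.imp B)) :
    S4Thm ((γ.imp A).imp (γ.imp B)) :=
  (S4Thm.ax2 γ A B).mp ((S4Thm.ax1 (A.imp B) γ).mp h)

lemma thmMpUnder {X Y Z : MF} (h1 : S4Thm (X.imp (Y.imp Z))) (h2 : S4Thm Y) :
    S4Thm (X.imp Z) :=
  ((S4Thm.ax2 X Y Z).mp h1).mp ((S4Thm.ax1 Y X).mp h2)

lemma thmB (X Y Z : MF) : S4Thm ((Y.imp Z).imp ((X.imp Y).imp (X.imp Z))) :=
  thmComp (S4Thm.ax1 (Y.imp Z) X) (S4Thm.ax2 X Y Z)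

lemma thmCInt (A B C : MF) : S4Thm ((A.imp (B.imp C)).imp (B.imp (A.imp C))) :=
  thmMpUnder (thmComp (S4Thm.ax2 A B C) (thmB B (A.imp B) (A.imp C))) (S4Thm.ax1 B A)

lemma thmC {A B C : MF} (h : S4Thm (A.imp (B.imp C))) : S4Thm (B.imp (A.imp C)) :=
  (thmCInt A B C).mp h

lemma thmW (A φ : MF) : S4Thm ((A.imp (A.imp φ)).imp (A.imp φ)) :=
  thmMpUnder (S4Thm.ax2 A A φ) (thmId A)

lemma thmWeakenFold (l : List MF) {φ : MF} (h : S4Thm φ) : S4Thm (l.foldr MF.imp φ) := by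
  induction l with
  | nil => exact h
  | cons γ l ih => exact (S4Thm.ax1 _ γ).mp ih

lemma thmFoldK (l : List MF) (α β : MF) :
    S4Thm ((l.foldr MF.imp (α.imp β)).imp
      ((l.foldr MF.imp α).imp (l.foldr MF.imp β))) := by
  induction l with
  | nil => exact thmId _
  | cons γ l ih => exact thmComp (thmLift γ ih) (S4Thm.ax2 γ _ _)

lemma thmFoldMp {l : List MF} {α β : MF}
    (h1 : S4Thm (l.foldr MF.imp (α.imp β))) (h2 : S4Thm (l.foldr MF.imp α)) :
    S4Thm (l.foldr MF.imp β) :=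
  ((thmFoldK l α β).mp h1).mp h2

lemma thmFoldLift (l : List MF) {φ ψ : MF} (h : S4Thm (φ.imp ψ)) :
    S4Thm ((l.foldr MF.imp φ).imp (l.foldr MF.imp ψ)) := by
  induction l with
  | nil => exact h
  | cons γ l ih => exact thmLift γ ih

lemma thmIntoFold (l : List MF) (φ : MF) : S4Thm (φ.imp (l.foldr MF.imp φ)) := by
  induction l with
  | nil => exact thmId φ
  | cons γ l ih => exact thmComp ih (S4Thm.ax1 _ γ)

lemma thmFoldW (m : List MF) (α φ : MF) :
    S4Thm ((α.imp (m.foldr MF.imp (α.imp φ))).imp (m.foldr MF.imp (α.imp φ))) := by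
  induction m with
  | nil => exact thmW α φ
  | cons δ m ih => exact thmComp (thmCInt α δ _) (thmLift δ ih)

lemma thmDed (α : MF) (l : List MF) (φ : MF) :
    S4Thm ((l.foldr MF.imp φ).imp
      ((l.filter (fun β => β ≠ α)).foldr MF.imp (α.imp φ))) := by
  induction l with
  | nil => exact S4Thm.ax1 φ α
  | cons γ l ih =>
    by_cases h : γ = α
    · subst h
      have hf : (γ :: l).filter (fun β => β ≠ γ) = l.filter (fun β => β ≠ γ) := by
        simp [List.filter_cons]
      rw [hf]
      exact thmComp (thmLift γ ih) (thmFoldW _ γ φ)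
    · have hf : (γ :: l).filter (fun β => β ≠ α) = γ :: l.filter (fun β => β ≠ α) := by
        simp [List.filter_cons, h]
      rw [hf]
      exact thmLift γ ih

end Aux
section Aux2

lemma deriv_iff {Γ : Set MF} {φ : MF} :
    S4Deriv Γ φ ↔ ∃ l : List MF, (∀ β ∈ l, β ∈ Γ) ∧ S4Thm (l.foldr MF.imp φ) := by
  constructor
  · rintro (h | ⟨l, _, hl, ht⟩)
    · exact ⟨[], by simp, h⟩
    · exact ⟨l, hl, ht⟩
  · rintro ⟨l, hl, ht⟩
    cases l with
    | nil => exact Or.inl ht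
    | cons a l => exact Or.inr ⟨a :: l, by simp, hl, ht⟩

lemma derivOfThm {Γ : Set MF} {φ : MF} (h : S4Thm φ) : S4Deriv Γ φ := Or.inl h

lemma derivOfMem {Γ : Set MF} {φ : MF} (h : φ ∈ Γ) : S4Deriv Γ φ :=
  deriv_iff.2 ⟨[φ], by simpa using h, thmId φ⟩

lemma derivMono {Γ Δ : Set MF} {φ : MF} (hsub : Γ ⊆ Δ) (h : S4Deriv Γ φ) :
    S4Deriv Δ φ := by
  rw [deriv_iff] at h ⊢
  obtain ⟨l, hl, ht⟩ := h
  exact ⟨l, fun β hβ => hsub (hl β hβ), ht⟩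

lemma derivMp {Γ : Set MF} {α β : MF} (h1 : S4Deriv Γ (α.imp β)) (h2 : S4Deriv Γ α) :
    S4Deriv Γ β := by
  rw [deriv_iff] at h1 h2 ⊢
  obtain ⟨l1, m1, t1⟩ := h1
  obtain ⟨l2, m2, t2⟩ := h2
  refine ⟨l1 ++ l2, ?_, ?_⟩
  · intro γ hγ
    rcases List.mem_append.1 hγ with h | h
    · exact m1 γ h
    · exact m2 γ h
  · rw [List.foldr_append]
    have a1 : S4Thm (l1.foldr MF.imp (l2.foldr MF.imp (α.imp β))) :=
      (thmFoldLift l1 (thmIntoFold l2 (α.imp β))).mp t1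
    have a2 : S4Thm (l1.foldr MF.imp ((l2.foldr MF.imp α).imp (l2.foldr MF.imp β))) :=
      (thmFoldLift l1 (thmFoldK l2 α β)).mp a1
    exact thmFoldMp a2 (thmWeakenFold l1 t2)

lemma derivDed {Γ : Set MF} {α φ : MF} (h : S4Deriv (insert α Γ) φ) :
    S4Deriv Γ (α.imp φ) := by
  rw [deriv_iff] at h ⊢
  obtain ⟨l, hm, ht⟩ := h
  refine ⟨l.filter (fun β => β ≠ α), ?_, (thmDed α l φ).mp ht⟩
  intro β hβ
  rw [List.mem_filter] at hβ
  have h1 := hm β hβ.1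
  have h2 : β ≠ α := by simpa using hβ.2
  rcases h1 with h | h
  · exact absurd h h2
  · exact h

/-! ### Saturated sets -/

variable {Δ : Set MF} {φ : MF}

lemma sat_dclosed (hΔ : SatS4 Δ φ) {β : MF} (h : S4Deriv Δ β) : β ∈ Δ := by
  by_contra hβ
  exact hΔ.1 (derivMp (derivDed (hΔ.2 β hβ)) h)

lemma sat_thm_mem (hΔ : SatS4 Δ φ) {β : MF} (h : S4Thm β) : β ∈ Δ :=
  sat_dclosed hΔ (derivOfThm h)

lemma sat_mp (hΔ : SatS4 Δ φ) {α β : MF} (h1 : α.imp β ∈ Δ) (h2 : α ∈ Δ) : β ∈ Δ :=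
  sat_dclosed hΔ (derivMp (derivOfMem h1) (derivOfMem h2))

lemma sat_notMem_imp (hΔ : SatS4 Δ φ) {α : MF} (h : α ∉ Δ) : S4Deriv Δ (α.imp φ) :=
  derivDed (hΔ.2 α h)

lemma sat_cases (hΔ : SatS4 Δ φ) {α : MF} (h1 : S4Deriv Δ (α.imp φ))
    (h2 : S4Deriv Δ (α.neg.imp φ)) : False := by
  apply hΔ.1
  have d1 : S4Deriv (insert φ.neg Δ) (α.imp φ) := derivMono (Set.subset_insert _ _) h1
  have d2 : S4Deriv (insert φ.neg Δ) (α.neg.imp φ) := derivMono (Set.subset_insert _ _) h2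
  have dn : S4Deriv (insert φ.neg Δ) φ.neg := derivOfMem (Set.mem_insert _ _)
  have dan : S4Deriv (insert φ.neg Δ) (α.imp φ.neg) :=
    derivMp (derivOfThm (S4Thm.ax1 φ.neg α)) dn
  have dna : S4Deriv (insert φ.neg Δ) α.neg :=
    derivMp (derivMp (derivOfThm (S4Thm.ax9 φ α)) d1) dan
  have dphi : S4Deriv (insert φ.neg Δ) φ := derivMp d2 dna
  have ded : S4Deriv Δ (φ.neg.imp φ) := derivDed dphi
  have dnn : S4Deriv Δ φ.neg.neg :=
    derivMp (derivMp (derivOfThm (S4Thm.ax9 φ φ.neg)) ded) (derivOfThm (thmId φ.neg))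
  exact derivMp (derivOfThm (S4Thm.dne φ)) dnn

lemma sat_neg_mem (hΔ : SatS4 Δ φ) {α : MF} (h : α ∉ Δ) : α.neg ∈ Δ := by
  by_contra hn
  exact sat_cases hΔ (sat_notMem_imp hΔ h) (sat_notMem_imp hΔ hn)

lemma sat_neg_notMem (hΔ : SatS4 Δ φ) {α : MF} (h : α ∈ Δ) : α.neg ∉ Δ := by
  intro hn
  exact hΔ.1 (derivOfMem (sat_mp hΔ (sat_mp hΔ (sat_thm_mem hΔ (S4Thm.ax10 α φ)) h) hn))

lemma sat_box_T (hΔ : SatS4 Δ φ) {α : MF} (h : α.box ∈ Δ) : α ∈ Δ :=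
  sat_mp hΔ (sat_thm_mem hΔ (S4Thm.axT α)) h

lemma sat_box_four (hΔ : SatS4 Δ φ) {α : MF} (h : α.box ∈ Δ) : α.box.box ∈ Δ :=
  sat_mp hΔ (sat_thm_mem hΔ (S4Thm.axFour α)) h

lemma thmBoxMono {x y : MF} (h : S4Thm (x.imp y)) : S4Thm (x.box.imp y.box) :=
  (S4Thm.axK x y).mp (S4Thm.nec h)

lemma sat_imp_mem (hΔ : SatS4 Δ φ) {α β : MF} :
    α.imp β ∈ Δ ↔ (α ∉ Δ ∨ β ∈ Δ) := by
  constructor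
  · intro h
    by_cases hα : α ∈ Δ
    · exact Or.inr (sat_mp hΔ h hα)
    · exact Or.inl hα
  · rintro (h | h)
    · exact sat_mp hΔ (sat_thm_mem hΔ (thmC (S4Thm.ax10 α β))) (sat_neg_mem hΔ h)
    · exact sat_mp hΔ (sat_thm_mem hΔ (S4Thm.ax1 β α)) h

lemma sat_dis_mem (hΔ : SatS4 Δ φ) {α β : MF} :
    α.dis β ∈ Δ ↔ (α ∈ Δ ∨ β ∈ Δ) := by
  constructor
  · intro h
    by_contra hc
    push_neg at hc
    have d1 := sat_notMem_imp hΔ hc.1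
    have d2 := sat_notMem_imp hΔ hc.2
    have := derivMp (derivMp (derivMp (derivOfThm (S4Thm.ax8 α β φ)) d1) d2)
      (derivOfMem h)
    exact hΔ.1 this
  · rintro (h | h)
    · exact sat_mp hΔ (sat_thm_mem hΔ (S4Thm.ax6 α β)) h
    · exact sat_mp hΔ (sat_thm_mem hΔ (S4Thm.ax7 α β)) h

lemma sat_con_mem (hΔ : SatS4 Δ φ) {α β : MF} :
    α.con β ∈ Δ ↔ (α ∈ Δ ∧ β ∈ Δ) := by
  constructor
  · intro h
    exact ⟨sat_mp hΔ (sat_thm_mem hΔ (S4Thm.ax4 α β)) h,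
      sat_mp hΔ (sat_thm_mem hΔ (S4Thm.ax5 α β)) h⟩
  · rintro ⟨h1, h2⟩
    exact sat_mp hΔ (sat_mp hΔ (sat_thm_mem hΔ (S4Thm.ax3 α β)) h1) h2

lemma sat_boxImp_of_box (hΔ : SatS4 Δ φ) {α β : MF} (h : β.box ∈ Δ) :
    (α.imp β).box ∈ Δ :=
  sat_mp hΔ (sat_thm_mem hΔ (thmBoxMono (S4Thm.ax1 β α))) h

lemma sat_boxK (hΔ : SatS4 Δ φ) {α β : MF} (h1 : (α.imp β).box ∈ Δ) (h2 : α.box ∈ Δ) :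
    β.box ∈ Δ :=
  sat_mp hΔ (sat_mp hΔ (sat_thm_mem hΔ (S4Thm.axK α β)) h1) h2

lemma sat_boxDis_left (hΔ : SatS4 Δ φ) {α β : MF} (h : α.box ∈ Δ) : (α.dis β).box ∈ Δ :=
  sat_mp hΔ (sat_thm_mem hΔ (thmBoxMono (S4Thm.ax6 α β))) h

lemma sat_boxDis_right (hΔ : SatS4 Δ φ) {α β : MF} (h : β.box ∈ Δ) : (α.dis β).box ∈ Δ :=
  sat_mp hΔ (sat_thm_mem hΔ (thmBoxMono (S4Thm.ax7 α β))) h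

lemma sat_boxCon (hΔ : SatS4 Δ φ) {α β : MF} (h1 : α.box ∈ Δ) (h2 : β.box ∈ Δ) :
    (α.con β).box ∈ Δ := by
  have hthm : S4Thm (α.box.imp (β.box.imp ((α.con β).box))) :=
    thmComp (thmBoxMono (S4Thm.ax3 α β)) (S4Thm.axK β (α.con β))
  exact sat_mp hΔ (sat_mp hΔ (sat_thm_mem hΔ hthm) h1) h2

lemma sat_boxCon_left (hΔ : SatS4 Δ φ) {α β : MF} (h : (α.con β).box ∈ Δ) : α.box ∈ Δ :=
  sat_mp hΔ (sat_thm_mem hΔ (thmBoxMono (S4Thm.ax4 α β))) h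

lemma sat_boxCon_right (hΔ : SatS4 Δ φ) {α β : MF} (h : (α.con β).box ∈ Δ) : β.box ∈ Δ :=
  sat_mp hΔ (sat_thm_mem hΔ (thmBoxMono (S4Thm.ax5 α β))) h

end Aux2
section Aux3

variable {Δ : Set MF} {φ : MF}

lemma vD_t {α : MF} (h : MF.box α ∈ Δ) : vDeltaS4 Δ α = V3.t := by
  simp [vDeltaS4, h]

lemma vD_o {α : MF} (h1 : MF.box α ∉ Δ) (h2 : α ∈ Δ) : vDeltaS4 Δ α = V3.o := by
  simp [vDeltaS4, h1, h2]

lemma vD_z {α : MF} (h1 : MF.box α ∉ Δ) (h2 : α ∉ Δ) : vDeltaS4 Δ α = V3.z := by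
  simp [vDeltaS4, h1, h2]

lemma vD_cases (Δ : Set MF) (α : MF) :
    (vDeltaS4 Δ α = V3.t ∧ MF.box α ∈ Δ) ∨
    (vDeltaS4 Δ α = V3.o ∧ MF.box α ∉ Δ ∧ α ∈ Δ) ∨
    (vDeltaS4 Δ α = V3.z ∧ MF.box α ∉ Δ ∧ α ∉ Δ) := by
  by_cases h1 : MF.box α ∈ Δ
  · exact Or.inl ⟨vD_t h1, h1⟩
  · by_cases h2 : α ∈ Δ
    · exact Or.inr (Or.inl ⟨vD_o h1 h2, h1, h2⟩)
    · exact Or.inr (Or.inr ⟨vD_z h1 h2, h1, h2⟩)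

lemma canonical_isVal (hΔ : SatS4 Δ φ) : IsVal (vDeltaS4 Δ) := by
  refine ⟨?_, ?_, ?_, ?_, ?_⟩
  · -- neg
    intro α
    rcases vD_cases Δ α with ⟨hv, hb⟩ | ⟨hv, hb, hm⟩ | ⟨hv, hb, hm⟩
    · have hm : α ∈ Δ := sat_box_T hΔ hb
      have h1 : α.neg ∉ Δ := sat_neg_notMem hΔ hm
      have h2 : MF.box α.neg ∉ Δ := fun h => h1 (sat_box_T hΔ h)
      rw [hv, vD_z h2 h1]; simp [negOp]
    · have h1 : α.neg ∉ Δ := sat_neg_notMem hΔ hm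
      have h2 : MF.box α.neg ∉ Δ := fun h => h1 (sat_box_T hΔ h)
      rw [hv, vD_z h2 h1]; simp [negOp]
    · have h1 : α.neg ∈ Δ := sat_neg_mem hΔ hm
      rw [hv]
      by_cases h2 : MF.box α.neg ∈ Δ
      · rw [vD_t h2]; simp [negOp]
      · rw [vD_o h2 h1]; simp [negOp]
  · -- box
    intro α
    rcases vD_cases Δ α with ⟨hv, hb⟩ | ⟨hv, hb, hm⟩ | ⟨hv, hb, hm⟩
    · rw [hv, vD_t (sat_box_four hΔ hb)]; simp [boxOp]
    · have h2 : MF.box α.box ∉ Δ := fun h => hb (sat_box_T hΔ h)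
      rw [hv, vD_z h2 hb]; simp [boxOp]
    · have h2 : MF.box α.box ∉ Δ := fun h => hb (sat_box_T hΔ h)
      rw [hv, vD_z h2 hb]; simp [boxOp]
  · -- imp
    intro α β
    rcases vD_cases Δ α with ⟨ha, hba⟩ | ⟨ha, hba, hma⟩ | ⟨ha, hba, hma⟩ <;>
      rcases vD_cases Δ β with ⟨hbv, hbb⟩ | ⟨hbv, hbb, hmb⟩ | ⟨hbv, hbb, hmb⟩ <;>
      rw [ha, hbv]
    · rw [vD_t (sat_boxImp_of_box hΔ hbb)]; simp [impOp]
    · -- α:t, β:o : value must be o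
      have hma : α ∈ Δ := sat_box_T hΔ hba
      have h1 : α.imp β ∈ Δ := (sat_imp_mem hΔ).2 (Or.inr hmb)
      have h2 : MF.box (α.imp β) ∉ Δ := fun h => hbb (sat_boxK hΔ h hba)
      rw [vD_o h2 h1]; simp [impOp]
    · -- α:t, β:z : value z
      have hma : α ∈ Δ := sat_box_T hΔ hba
      have h1 : α.imp β ∉ Δ := by
        intro h; exact hmb (sat_mp hΔ h hma)
      have h2 : MF.box (α.imp β) ∉ Δ := fun h => h1 (sat_box_T hΔ h)
      rw [vD_z h2 h1]; simp [impOp]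
    · rw [vD_t (sat_boxImp_of_box hΔ hbb)]; simp [impOp]
    · -- α:o, β:o : {o,t}
      have h1 : α.imp β ∈ Δ := (sat_imp_mem hΔ).2 (Or.inr hmb)
      by_cases h2 : MF.box (α.imp β) ∈ Δ
      · rw [vD_t h2]; simp [impOp]
      · rw [vD_o h2 h1]; simp [impOp]
    · -- α:o, β:z : z
      have h1 : α.imp β ∉ Δ := by
        intro h; exact hmb (sat_mp hΔ h hma)
      have h2 : MF.box (α.imp β) ∉ Δ := fun h => h1 (sat_box_T hΔ h)
      rw [vD_z h2 h1]; simp [impOp]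
    · rw [vD_t (sat_boxImp_of_box hΔ hbb)]; simp [impOp]
    · -- α:z, β:o : {o,t}
      have h1 : α.imp β ∈ Δ := (sat_imp_mem hΔ).2 (Or.inl hma)
      by_cases h2 : MF.box (α.imp β) ∈ Δ
      · rw [vD_t h2]; simp [impOp]
      · rw [vD_o h2 h1]; simp [impOp]
    · -- α:z, β:z : {o,t}
      have h1 : α.imp β ∈ Δ := (sat_imp_mem hΔ).2 (Or.inl hma)
      by_cases h2 : MF.box (α.imp β) ∈ Δ
      · rw [vD_t h2]; simp [impOp]
      · rw [vD_o h2 h1]; simp [impOp]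
  · -- dis
    intro α β
    rcases vD_cases Δ α with ⟨ha, hba⟩ | ⟨ha, hba, hma⟩ | ⟨ha, hba, hma⟩ <;>
      rcases vD_cases Δ β with ⟨hbv, hbb⟩ | ⟨hbv, hbb, hmb⟩ | ⟨hbv, hbb, hmb⟩ <;>
      rw [ha, hbv]
    · rw [vD_t (sat_boxDis_left hΔ hba)]; simp [disOp]
    · rw [vD_t (sat_boxDis_left hΔ hba)]; simp [disOp]
    · rw [vD_t (sat_boxDis_left hΔ hba)]; simp [disOp]
    · rw [vD_t (sat_boxDis_right hΔ hbb)]; simp [disOp]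
    · -- o,o
      have h1 : α.dis β ∈ Δ := (sat_dis_mem hΔ).2 (Or.inl hma)
      by_cases h2 : MF.box (α.dis β) ∈ Δ
      · rw [vD_t h2]; simp [disOp]
      · rw [vD_o h2 h1]; simp [disOp]
    · -- o,z
      have h1 : α.dis β ∈ Δ := (sat_dis_mem hΔ).2 (Or.inl hma)
      by_cases h2 : MF.box (α.dis β) ∈ Δ
      · rw [vD_t h2]; simp [disOp]
      · rw [vD_o h2 h1]; simp [disOp]
    · rw [vD_t (sat_boxDis_right hΔ hbb)]; simp [disOp]
    · -- z,o
      have h1 : α.dis β ∈ Δ := (sat_dis_mem hΔ).2 (Or.inr hmb)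
      by_cases h2 : MF.box (α.dis β) ∈ Δ
      · rw [vD_t h2]; simp [disOp]
      · rw [vD_o h2 h1]; simp [disOp]
    · -- z,z
      have h1 : α.dis β ∉ Δ := by
        intro h; rcases (sat_dis_mem hΔ).1 h with h | h
        · exact hma h
        · exact hmb h
      have h2 : MF.box (α.dis β) ∉ Δ := fun h => h1 (sat_box_T hΔ h)
      rw [vD_z h2 h1]; simp [disOp]
  · -- con
    intro α β
    have hzz : (α.con β ∉ Δ) → vDeltaS4 Δ (α.con β) = V3.z := by
      intro h1
      exact vD_z (fun h => h1 (sat_box_T hΔ h)) h1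
    rcases vD_cases Δ α with ⟨ha, hba⟩ | ⟨ha, hba, hma⟩ | ⟨ha, hba, hma⟩ <;>
      rcases vD_cases Δ β with ⟨hbv, hbb⟩ | ⟨hbv, hbb, hmb⟩ | ⟨hbv, hbb, hmb⟩ <;>
      rw [ha, hbv]
    · rw [vD_t (sat_boxCon hΔ hba hbb)]; simp [conOp]
    · -- t,o : value o
      have h1 : α.con β ∈ Δ := (sat_con_mem hΔ).2 ⟨sat_box_T hΔ hba, hmb⟩
      have h2 : MF.box (α.con β) ∉ Δ := fun h => hbb (sat_boxCon_right hΔ h)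
      rw [vD_o h2 h1]; simp [conOp]
    · -- t,z
      have h1 : α.con β ∉ Δ := fun h => hmb ((sat_con_mem hΔ).1 h).2
      rw [hzz h1]; simp [conOp]
    · -- o,t
      have h1 : α.con β ∈ Δ := (sat_con_mem hΔ).2 ⟨hma, sat_box_T hΔ hbb⟩
      have h2 : MF.box (α.con β) ∉ Δ := fun h => hba (sat_boxCon_left hΔ h)
      rw [vD_o h2 h1]; simp [conOp]
    · -- o,o
      have h1 : α.con β ∈ Δ := (sat_con_mem hΔ).2 ⟨hma, hmb⟩
      have h2 : MF.box (α.con β) ∉ Δ := fun h => hba (sat_boxCon_left hΔ h)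
      rw [vD_o h2 h1]; simp [conOp]
    · -- o,z
      have h1 : α.con β ∉ Δ := fun h => hmb ((sat_con_mem hΔ).1 h).2
      rw [hzz h1]; simp [conOp]
    · -- z,t
      have h1 : α.con β ∉ Δ := fun h => hma ((sat_con_mem hΔ).1 h).1
      rw [hzz h1]; simp [conOp]
    · have h1 : α.con β ∉ Δ := fun h => hma ((sat_con_mem hΔ).1 h).1
      rw [hzz h1]; simp [conOp]
    · have h1 : α.con β ∉ Δ := fun h => hma ((sat_con_mem hΔ).1 h).1
      rw [hzz h1]; simp [conOp]

end Aux3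
section Aux4

lemma chain_list_bound {c : Set (Set MF)} (hc : IsChain (· ⊆ ·) c) (hne : c.Nonempty)
    (l : List MF) (hl : ∀ β ∈ l, β ∈ ⋃₀ c) : ∃ s ∈ c, ∀ β ∈ l, β ∈ s := by
  induction l with
  | nil => exact ⟨hne.choose, hne.choose_spec, by simp⟩
  | cons a l ih =>
    obtain ⟨s, hs, hsl⟩ := ih (fun β hβ => hl β (by simp [hβ]))
    obtain ⟨t, ht, hat⟩ := hl a (by simp)
    rcases hc.total hs ht with hst | hts
    · refine ⟨t, ht, ?_⟩
      intro β hβ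
      rcases List.mem_cons.1 hβ with rfl | h
      · exact hat
      · exact hst (hsl β h)
    · refine ⟨s, hs, ?_⟩
      intro β hβ
      rcases List.mem_cons.1 hβ with rfl | h
      · exact hts hat
      · exact hsl β h

lemma lindenbaum {Γ : Set MF} {φ : MF} (h : ¬ S4Deriv Γ φ) :
    ∃ Δ, Γ ⊆ Δ ∧ SatS4 Δ φ := by
  have H : ∀ c ⊆ {Δ : Set MF | ¬ S4Deriv Δ φ}, IsChain (· ⊆ ·) c → c.Nonempty →
      ∃ ub ∈ {Δ : Set MF | ¬ S4Deriv Δ φ}, ∀ s ∈ c, s ⊆ ub := by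
    intro c hcS hchain hcne
    refine ⟨⋃₀ c, ?_, fun s hs => Set.subset_sUnion_of_mem hs⟩
    intro hder
    rw [deriv_iff] at hder
    obtain ⟨l, hl, ht⟩ := hder
    obtain ⟨s, hs, hsl⟩ := chain_list_bound hchain hcne l hl
    exact hcS hs (deriv_iff.2 ⟨l, hsl, ht⟩)
  obtain ⟨Δ, hsub, hmax⟩ := zorn_subset_nonempty {Δ : Set MF | ¬ S4Deriv Δ φ} H Γ h
  refine ⟨Δ, hsub, hmax.1, ?_⟩
  intro α hα
  by_contra hnd
  have : insert α Δ ⊆ Δ := hmax.2 hnd (Set.subset_insert _ _)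
  exact hα (this (Set.mem_insert _ _))

lemma level_zero {v : MF → V3} : v ∈ LevelS4 0 ↔ IsVal v := Iff.rfl

lemma level_succ_subset (k : ℕ) : LevelS4 (k + 1) ⊆ LevelS4 k := fun _ hv => hv.1

lemma level_antitone {j k : ℕ} (h : j ≤ k) : LevelS4 k ⊆ LevelS4 j := by
  induction h with
  | refl => exact fun _ h => h
  | step h ih => exact fun w hw => ih (level_succ_subset _ hw)

lemma lvs_mem_level {v : MF → V3} (hv : v ∈ LVS4) (k : ℕ) : v ∈ LevelS4 k :=
  Set.mem_iInter.1 hv k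

lemma lvs_isVal {v : MF → V3} (hv : v ∈ LVS4) : IsVal v := lvs_mem_level hv 0

lemma not_deriv_empty {α : MF} (h : ¬ S4Thm α) : ¬ S4Deriv (∅ : Set MF) α := by
  rintro (h' | ⟨l, hlne, hl, _⟩)
  · exact h h'
  · cases l with
    | nil => exact hlne rfl
    | cons a l => exact absurd (hl a (by simp)) (Set.notMem_empty a)

lemma canonical_level : ∀ (k : ℕ) {Δ : Set MF} {φ : MF},
    SatS4 Δ φ → vDeltaS4 Δ ∈ LevelS4 k := by
  intro k
  induction k with
  | zero => intro Δ φ h; exact canonical_isVal h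
  | succ k ih =>
    intro Δ φ h
    refine ⟨ih h, ?_⟩
    intro α hα
    have hthm : S4Thm α := by
      by_contra hna
      obtain ⟨Δ', _, hΔ'⟩ := lindenbaum (not_deriv_empty hna)
      have hαΔ' : α ∉ Δ' := fun hm => hΔ'.1 (derivOfMem hm)
      have hbox : MF.box α ∉ Δ' := fun hm => hαΔ' (sat_box_T hΔ' hm)
      have hz := hα _ (ih hΔ')
      rw [vD_z hbox hαΔ'] at hz
      simp [Des] at hz
    exact vD_t (sat_thm_mem h hthm.nec)

lemma canonical_lvs {Δ : Set MF} {φ : MF} (h : SatS4 Δ φ) : vDeltaS4 Δ ∈ LVS4 :=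
  Set.mem_iInter.2 fun k => canonical_level k h

end Aux4
section Aux5

lemma des_imp_iff {w : MF → V3} (hw : IsVal w) (α β : MF) :
    w (α.imp β) ∈ Des ↔ (w α ∈ Des → w β ∈ Des) := by
  have h := hw.2.2.1 α β
  cases hx : w α <;> cases hy : w β <;> cases hz : w (α.imp β) <;>
    simp_all [impOp, Des]

lemma des_neg_iff {w : MF → V3} (hw : IsVal w) (α : MF) :
    w (α.neg) ∈ Des ↔ ¬ (w α ∈ Des) := by
  have h := hw.1 α
  cases hx : w α <;> cases hz : w (α.neg) <;> simp_all [negOp, Des]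

lemma des_dis_iff {w : MF → V3} (hw : IsVal w) (α β : MF) :
    w (α.dis β) ∈ Des ↔ (w α ∈ Des ∨ w β ∈ Des) := by
  have h := hw.2.2.2.1 α β
  cases hx : w α <;> cases hy : w β <;> cases hz : w (α.dis β) <;>
    simp_all [disOp, Des]

lemma des_con_iff {w : MF → V3} (hw : IsVal w) (α β : MF) :
    w (α.con β) ∈ Des ↔ (w α ∈ Des ∧ w β ∈ Des) := by
  have h := hw.2.2.2.2 α β
  cases hx : w α <;> cases hy : w β <;> cases hz : w (α.con β) <;>
    simp_all [conOp, Des]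

lemma des_box {w : MF → V3} (hw : IsVal w) {α : MF} (h : w (α.box) ∈ Des) :
    w (α.box) = V3.t ∧ w α = V3.t := by
  have hb := hw.2.1 α
  cases hx : w α <;> cases hz : w (α.box) <;> simp_all [boxOp, Des]

lemma box_t {w : MF → V3} (hw : IsVal w) {α : MF} (h : w α = V3.t) :
    w (α.box) = V3.t := by
  have hb := hw.2.1 α
  rw [h] at hb
  simpa [boxOp] using hb

lemma imp_t {w : MF → V3} (hw : IsVal w) {α β : MF} (h1 : w (α.imp β) = V3.t)
    (h2 : w α = V3.t) : w β = V3.t := by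
  have h := hw.2.2.1 α β
  rw [h1, h2] at h
  cases hy : w β <;> simp_all [impOp]

lemma t_des {x : V3} (h : x = V3.t) : x ∈ Des := by simp [Des, h]

lemma soundness {α : MF} (h : S4Thm α) :
    ∃ k, ∀ w ∈ LevelS4 k, w α ∈ Des := by
  induction h with
  | ax1 α β =>
    refine ⟨0, fun w hw => ?_⟩
    have hv : IsVal w := hw
    rw [des_imp_iff hv, des_imp_iff hv]
    generalize (w α ∈ Des) = P; generalize (w β ∈ Des) = Q
    tauto
  | ax2 α β γ =>
    refine ⟨0, fun w hw => ?_⟩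
    have hv : IsVal w := hw
    simp only [des_imp_iff hv]
    generalize (w α ∈ Des) = P; generalize (w β ∈ Des) = Q; generalize (w γ ∈ Des) = R
    tauto
  | ax3 α β =>
    refine ⟨0, fun w hw => ?_⟩
    have hv : IsVal w := hw
    simp only [des_imp_iff hv, des_con_iff hv]
    generalize (w α ∈ Des) = P; generalize (w β ∈ Des) = Q
    tauto
  | ax4 α β =>
    refine ⟨0, fun w hw => ?_⟩
    have hv : IsVal w := hw
    simp only [des_imp_iff hv, des_con_iff hv]
    generalize (w α ∈ Des) = P; generalize (w β ∈ Des) = Q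
    tauto
  | ax5 α β =>
    refine ⟨0, fun w hw => ?_⟩
    have hv : IsVal w := hw
    simp only [des_imp_iff hv, des_con_iff hv]
    generalize (w α ∈ Des) = P; generalize (w β ∈ Des) = Q
    tauto
  | ax6 α β =>
    refine ⟨0, fun w hw => ?_⟩
    have hv : IsVal w := hw
    simp only [des_imp_iff hv, des_dis_iff hv]
    generalize (w α ∈ Des) = P; generalize (w β ∈ Des) = Q
    tauto
  | ax7 α β =>
    refine ⟨0, fun w hw => ?_⟩
    have hv : IsVal w := hw
    simp only [des_imp_iff hv, des_dis_iff hv]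
    generalize (w α ∈ Des) = P; generalize (w β ∈ Des) = Q
    tauto
  | ax8 α β γ =>
    refine ⟨0, fun w hw => ?_⟩
    have hv : IsVal w := hw
    simp only [des_imp_iff hv, des_dis_iff hv]
    generalize (w α ∈ Des) = P; generalize (w β ∈ Des) = Q; generalize (w γ ∈ Des) = R
    tauto
  | ax9 α β =>
    refine ⟨0, fun w hw => ?_⟩
    have hv : IsVal w := hw
    simp only [des_imp_iff hv, des_neg_iff hv]
    generalize (w α ∈ Des) = P; generalize (w β ∈ Des) = Q
    tauto
  | ax10 α β =>
    refine ⟨0, fun w hw => ?_⟩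
    have hv : IsVal w := hw
    simp only [des_imp_iff hv, des_neg_iff hv]
    generalize (w α ∈ Des) = P; generalize (w β ∈ Des) = Q
    tauto
  | dne α =>
    refine ⟨0, fun w hw => ?_⟩
    have hv : IsVal w := hw
    simp only [des_imp_iff hv, des_neg_iff hv]
    generalize (w α ∈ Des) = P
    tauto
  | axK α β =>
    refine ⟨0, fun w hw => ?_⟩
    have hv : IsVal w := hw
    rw [des_imp_iff hv, des_imp_iff hv]
    intro h1 h2
    obtain ⟨_, hab⟩ := des_box hv h1
    obtain ⟨_, ha⟩ := des_box hv h2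
    exact t_des (box_t hv (imp_t hv hab ha))
  | axT α =>
    refine ⟨0, fun w hw => ?_⟩
    have hv : IsVal w := hw
    rw [des_imp_iff hv]
    intro h1
    exact t_des (des_box hv h1).2
  | axFour α =>
    refine ⟨0, fun w hw => ?_⟩
    have hv : IsVal w := hw
    rw [des_imp_iff hv]
    intro h1
    exact t_des (box_t hv (des_box hv h1).1)
  | mp h1 h2 ih1 ih2 =>
    obtain ⟨k1, hk1⟩ := ih1
    obtain ⟨k2, hk2⟩ := ih2
    refine ⟨max k1 k2, fun w hw => ?_⟩
    have hv : IsVal w := level_antitone (Nat.zero_le _) hw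
    have d1 := hk1 w (level_antitone (le_max_left k1 k2) hw)
    have d2 := hk2 w (level_antitone (le_max_right k1 k2) hw)
    rw [des_imp_iff hv] at d1
    exact d1 d2
  | nec h ih =>
    obtain ⟨k, hk⟩ := ih
    refine ⟨k + 1, fun w hw => ?_⟩
    have hv : IsVal w := level_antitone (Nat.zero_le _) hw
    exact t_des (box_t hv (hw.2 _ hk))

lemma lvs_thm_t {v : MF → V3} (hv : v ∈ LVS4) {α : MF} (h : S4Thm α) : v α = V3.t := by
  obtain ⟨k, hk⟩ := soundness h
  exact (lvs_mem_level hv (k + 1)).2 α hk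

lemma fold_t {v : MF → V3} (hval : IsVal v) :
    ∀ (l : List MF) (α : MF), v (l.foldr MF.imp α) = V3.t →
      (∀ β ∈ l, v β = V3.t) → v α = V3.t := by
  intro l
  induction l with
  | nil => intro α h _; exact h
  | cons γ l ih =>
    intro α h hβ
    have hγ : v γ = V3.t := hβ γ (by simp)
    have h2 : v (l.foldr MF.imp α) = V3.t := imp_t hval h hγ
    exact ih α h2 (fun β hb => hβ β (by simp [hb]))

end Aux5
/-- Co-analyticity for R(M'_S4): the restriction of a level valuation
to a nonempty subformula-closed set Λ belongs to PLV'(Λ). -/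
theorem s4_coanalyticity (v : MF → V3) (hv : v ∈ LVS4) (Λ : Set MF)
    (hne : Λ.Nonempty) (hcl : SubClosed Λ) :
    v ∈ PLV' Λ := by
  have hval : IsVal v := lvs_isVal hv
  refine ⟨⟨fun α _ => hval.1 α, fun α _ => hval.2.1 α, fun α β _ => hval.2.2.1 α β,
    fun α β _ => hval.2.2.2.1 α β, fun α β _ => hval.2.2.2.2 α β⟩, ?_⟩
  intro α _ hαo
  have hnd : ¬ S4Deriv {γ | v γ = V3.t} α := by
    rw [deriv_iff]
    rintro ⟨l, hl, ht⟩
    have hfold : v (l.foldr MF.imp α) = V3.t := lvs_thm_t hv ht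
    have : v α = V3.t := fold_t hval l α hfold hl
    rw [hαo] at this
    exact V3.noConfusion this
  obtain ⟨Δ, hΓΔ, hΔ⟩ := lindenbaum hnd
  refine ⟨vDeltaS4 Δ, canonical_lvs hΔ, ?_, ?_⟩
  · have hα : α ∉ Δ := fun h => hΔ.1 (derivOfMem h)
    have hbα : MF.box α ∉ Δ := fun h => hα (sat_box_T hΔ h)
    exact vD_z hbα hα
  · intro β _ hβt
    have hb : v (MF.box β) = V3.t := by
      have h := hval.2.1 β
      rw [hβt] at h
      simpa [boxOp] using h
    exact vD_t (hΓΔ hb)
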